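/- Let f be a piecewise contracting interval map on X satisfying the separation property and D ⊂ X̃. Then the Hausdorff dimension of the attractor Λ of f is equal to zero. -/

import Mathlib

open Set Filter Metric Topology

/-- A piecewise contracting interval map (PCIM) on the compact interval `X = [a,b]`:
there are `N ≥ 1` pairwise disjoint nonempty open (relative to `X`) subintervals
whose closures cover `X`, and `f` contracts with rate `lam ∈ (0,1)` on each piece. -/
structure PCIM where
  a : ℝ
  b : ℝ
  hab : a < b
  N : ℕ
  hN : 1 ≤ N
  f : ℝ → ℝ
  lam : ℝ
  hlam₀ : 0 < lam
  hlam₁ : lam < 1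
  piece : Fin N → Set ℝ
  piece_nonempty : ∀ i, (piece i).Nonempty
  piece_interval : ∀ i, ∃ c d : ℝ, piece i = Set.Ioo c d ∩ Set.Icc a b
  piece_disjoint : ∀ i j, i ≠ j → Disjoint (piece i) (piece j)
  cover : Set.Icc a b = ⋃ i, closure (piece i)
  mapsTo : Set.MapsTo f (Set.Icc a b) (Set.Icc a b)
  contract : ∀ i, ∀ x ∈ piece i, ∀ y ∈ piece i, |f x - f y| ≤ lam * |x - y|

namespace PCIM

variable (P : PCIM)

/-- The underlying compact interval `X`. -/
def X : Set ℝ := Set.Icc P.a P.b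

/-- `X* = ⋃ i, X_i`, the union of the contraction pieces. -/
def Xstar : Set ℝ := ⋃ i, P.piece i

/-- `Δ = X \ X*`, the set of boundaries of the contraction pieces. -/
def Delta : Set ℝ := P.X \ P.Xstar

/-- `X̃ = ⋂_{j ≥ 0} f⁻ʲ(X*)`, the points all of whose iterates are well defined. -/
def Xtilde : Set ℝ := ⋂ j : ℕ, (P.f^[j]) ⁻¹' P.Xstar

/-- `D`: the set of one-sided limits of `f` at the points of `Δ`. -/
def D : Set ℝ :=
  {L | ∃ c ∈ P.Delta,
    ((𝓝[P.X ∩ Set.Iio c] c).NeBot ∧ Filter.Tendsto P.f (𝓝[P.X ∩ Set.Iio c] c) (𝓝 L)) ∨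
    ((𝓝[P.X ∩ Set.Ioi c] c).NeBot ∧ Filter.Tendsto P.f (𝓝[P.X ∩ Set.Ioi c] c) (𝓝 L))}

/-- A set `A` is `f`-pseudo-invariant if for every `x ∈ A` at least one of the
one-sided limits of `f` at `x` belongs to `A`. -/
def PseudoInvariant (A : Set ℝ) : Prop :=
  ∀ x ∈ A,
    (∃ L ∈ A, (𝓝[P.X ∩ Set.Iio x] x).NeBot ∧
      Filter.Tendsto P.f (𝓝[P.X ∩ Set.Iio x] x) (𝓝 L)) ∨
    (∃ L ∈ A, (𝓝[P.X ∩ Set.Ioi x] x).NeBot ∧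
      Filter.Tendsto P.f (𝓝[P.X ∩ Set.Ioi x] x) (𝓝 L))

/-- `f` is piecewise monotonic: strictly monotone on each contraction piece. -/
def PiecewiseMonotonic : Prop :=
  ∀ i, StrictMonoOn P.f (P.piece i) ∨ StrictAntiOn P.f (P.piece i)

/-- `f` satisfies the separation property: it is piecewise monotonic and the closures
of the images of distinct pieces are disjoint. -/
def SeparationProperty : Prop :=
  P.PiecewiseMonotonic ∧
    ∀ i j, i ≠ j → closure (P.f '' P.piece i) ∩ closure (P.f '' P.piece j) = ∅

/-- The iterates `Λ_n` defining the attractor: `Λ_0 = X`,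
`Λ_{n+1} = cl (f (Λ_n \ Δ))`. -/
def LambdaIter : (P : PCIM) → ℕ → Set ℝ
  | Q, 0 => Q.X
  | Q, n + 1 => closure (Q.f '' (LambdaIter Q n \ Q.Delta))

/-- The attractor `Λ = ⋂_{n ≥ 1} Λ_n`. -/
def Lambda : Set ℝ := ⋂ n : ℕ, P.LambdaIter (n + 1)

/-- The atom associated to the word `w = [i₁, …, iₙ]`:
`A_{i₁…iₙ} = F_{iₙ} ∘ ⋯ ∘ F_{i₁}(X)` where `F_i(A) = cl (f (A ∩ X_i))`. -/
def atomOf (w : List (Fin P.N)) : Set ℝ :=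
  w.foldl (fun A i => closure (P.f '' (A ∩ P.piece i))) P.X

/-- `𝒜_n`: the set of (nonempty) atoms of generation `n`. -/
def atoms (n : ℕ) : Set (Set ℝ) :=
  {A | ∃ w : List (Fin P.N), w.length = n ∧ P.atomOf w = A ∧ A.Nonempty}

/-- `θ` is the itinerary of `x`: `f^t(x) ∈ X_{θ_t}` for all `t`. -/
def IsItinerary (x : ℝ) (θ : ℕ → Fin P.N) : Prop :=
  ∀ t : ℕ, P.f^[t] x ∈ P.piece (θ t)

/-- The word `θ_t θ_{t+1} … θ_{t+n-1}` of length `n` of the sequence `θ`. -/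
def word (θ : ℕ → Fin P.N) (t n : ℕ) : List (Fin P.N) :=
  (List.range n).map fun k => θ (t + k)

/-- `L_n(θ)`: the set of words of length `n` occurring in `θ`. -/
def lang (θ : ℕ → Fin P.N) (n : ℕ) : Set (List (Fin P.N)) :=
  {w | ∃ t : ℕ, w = P.word θ t n}

/-- The complexity function `p_θ(n) = #L_n(θ)`. -/
noncomputable def complexity (θ : ℕ → Fin P.N) (n : ℕ) : ℕ := (P.lang θ n).ncard

/-- The forward orbit of `x` under `f`. -/
def orbit (x : ℝ) : Set ℝ := {y | ∃ k : ℕ, P.f^[k] x = y}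

/-- The ω-limit set of `x` under `f`. -/
def omegaLimitSet (x : ℝ) : Set ℝ :=
  ⋂ n : ℕ, closure {y | ∃ m : ℕ, n ≤ m ∧ P.f^[m] x = y}

/-- A compact pseudo-invariant set `A` is `X̃`-minimal if the orbit of every point
of `A ∩ X̃` is dense in `A`. -/
def XtildeMinimal (A : Set ℝ) : Prop :=
  IsCompact A ∧ P.PseudoInvariant A ∧ ∀ x ∈ A ∩ P.Xtilde, A ⊆ closure (P.orbit x)

/-- A periodic orbit contained in `X̃`. -/
def IsPeriodicOrbit (A : Set ℝ) : Prop :=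
  ∃ x ∈ P.Xtilde, ∃ p : ℕ, 1 ≤ p ∧ P.f^[p] x = x ∧ A = P.orbit x

end PCIM

/-- A Cantor set: nonempty, compact, perfect and totally disconnected. -/
def IsCantorSet (A : Set ℝ) : Prop :=
  A.Nonempty ∧ IsCompact A ∧ Perfect A ∧ IsTotallyDisconnected A


/-!
Under the separation property the atoms of each generation are pairwise disjoint intervals,
because `f` extends continuously and injectively to the closure of every piece. An atom of
generation `n` has one child per piece it meets, and every such piece except the rightmost has
its supremum inside the atom; hence `#𝒜ₙ₊₁ ≤ #𝒜ₙ + N`. So `Λ` is covered by `O(n)` atoms of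
diameter at most `λⁿ |X|`, and `O(n) λ^{dn} → 0` for every `d > 0`.
-/

open scoped ENNReal NNReal

theorem ENNReal.tendsto_nat_mul_pow_atTop_nhds_zero {q : ℝ≥0∞} (hq : q < 1) :
    Tendsto (fun n : ℕ => (n : ℝ≥0∞) * q ^ n) atTop (𝓝 0) := by
  lift q to ℝ≥0 using hq.ne_top
  have hq' : Tendsto (fun n : ℕ => (n : ℝ≥0) * q ^ n) atTop (𝓝 0) := by
    rw [← NNReal.tendsto_coe]
    push_cast
    exact tendsto_self_mul_const_pow_of_lt_one q.2 (mod_cast hq)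
  simpa using ENNReal.tendsto_coe.2 hq'

section HausdorffDimension

variable {X : Type*} [EMetricSpace X] [MeasurableSpace X] [BorelSpace X]

open MeasureTheory

theorem hausdorffMeasure_eq_zero_of_finite_covers {s : Set X} {d : ℝ} (hd : 0 ≤ d)
    (t : ℕ → Set (Set X)) (r : ℕ → ℝ≥0∞) (hr : Tendsto r atTop (𝓝 0))
    (ht : ∀ n, (t n).Finite) (hdiam : ∀ n, ∀ A ∈ t n, ediam A ≤ r n)
    (hcover : ∀ n, s ⊆ ⋃₀ t n) (hsum : Tendsto (fun n => (t n).ncard * r n ^ d) atTop (𝓝 0)) :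
    μH[d] s = 0 := by
  have := fun n => (ht n).fintype
  have hle := Measure.hausdorffMeasure_le_liminf_sum d s r hr (fun n (A : t n) => (A : Set X))
    (.of_forall fun n A => hdiam n A A.2)
    (.of_forall fun n => by simpa [sUnion_eq_iUnion] using hcover n)
  have hsum_le : ∀ n, ∑ A : t n, ediam (A : Set X) ^ d ≤ (t n).ncard * r n ^ d := fun n =>
    calc ∑ A : t n, ediam (A : Set X) ^ d ≤ ∑ _A : t n, r n ^ d :=
          Finset.sum_le_sum fun A _ => ENNReal.rpow_le_rpow (hdiam n A A.2) hd
      _ = (t n).ncard * r n ^ d := by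
          rw [Finset.sum_const, Finset.card_univ, nsmul_eq_mul, ← Nat.card_eq_fintype_card,
            Nat.card_coe_set_eq]
  refine le_antisymm (hle.trans ?_) zero_le
  calc liminf (fun n => ∑ A : t n, ediam (A : Set X) ^ d) atTop
      ≤ liminf (fun n => ((t n).ncard : ℝ≥0∞) * r n ^ d) atTop :=
        liminf_le_liminf (.of_forall hsum_le)
    _ = 0 := hsum.liminf_eq

theorem dimH_eq_zero_of_linear_covers {s : Set X} (t : ℕ → Set (Set X)) {a b : ℕ}
    {C ρ : ℝ≥0∞} (hC : C ≠ ∞) (hρ : ρ < 1) (ht : ∀ n, (t n).Finite)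
    (hcard : ∀ n, (t n).ncard ≤ a + b * n) (hdiam : ∀ n, ∀ A ∈ t n, ediam A ≤ C * ρ ^ n)
    (hcover : ∀ n, s ⊆ ⋃₀ t n) : dimH s = 0 := by
  have hr : Tendsto (fun n => C * ρ ^ n) atTop (𝓝 0) := by
    simpa using ENNReal.Tendsto.const_mul (ENNReal.tendsto_pow_atTop_nhds_zero_of_lt_one hρ)
      (.inr hC)
  have hμ : ∀ d : ℝ, 0 < d → μH[d] s = 0 := by
    intro d hd
    refine hausdorffMeasure_eq_zero_of_finite_covers hd.le t _ hr ht hdiam hcover ?_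
    have hρd : ρ ^ d < 1 := ENNReal.rpow_lt_one hρ hd
    have hpow : ∀ n : ℕ, (C * ρ ^ n) ^ d = C ^ d * (ρ ^ d) ^ n := fun n => by
      rw [ENNReal.mul_rpow_of_nonneg _ _ hd.le, ← ENNReal.rpow_natCast_mul, mul_comm (n : ℝ),
        ENNReal.rpow_mul_natCast]
    have hlin :
        Tendsto (fun n : ℕ => ((a + b * n : ℕ) : ℝ≥0∞) * (C * ρ ^ n) ^ d) atTop (𝓝 0) := by
      have := ENNReal.Tendsto.const_mul
        ((ENNReal.Tendsto.const_mul (ENNReal.tendsto_pow_atTop_nhds_zero_of_lt_one hρd)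
          (.inr (ENNReal.natCast_ne_top a))).add
        (ENNReal.Tendsto.const_mul (ENNReal.tendsto_nat_mul_pow_atTop_nhds_zero hρd)
          (.inr (ENNReal.natCast_ne_top b))))
        (.inr (ENNReal.rpow_ne_top_of_nonneg hd.le hC))
      simpa [hpow, add_mul, mul_assoc, mul_left_comm _ (C ^ d)] using this
    exact tendsto_of_tendsto_of_tendsto_of_le_of_le tendsto_const_nhds hlin (fun _ => zero_le)
      fun n => mul_le_mul_left (mod_cast hcard n) _
  refine le_antisymm (dimH_le fun d hd => ?_) zero_le
  rcases eq_or_ne d 0 with rfl | hd0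
  · simp
  · simp [hμ d (mod_cast pos_iff_ne_zero.2 hd0)] at hd

end HausdorffDimension

theorem Set.OrdConnected.csSup_mem_Icc {α : Type*} [ConditionallyCompleteLinearOrder α]
    {I : Set α} (hI : I.OrdConnected) {x y : α} (hx : x ∈ I) (hy : y ∉ I) (hxy : x ≤ y) :
    sSup I ∈ Icc x y := by
  have hle : ∀ z ∈ I, z ≤ y := fun z hz =>
    le_of_not_gt fun hyz => hy (hI.out hx hz ⟨hxy, hyz.le⟩)
  exact ⟨le_csSup ⟨y, hle⟩ hx, csSup_le ⟨x, hx⟩ hle⟩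

theorem Set.OrdConnected.Ioo_subset_of_mem_closure {α : Type*} [LinearOrder α]
    [TopologicalSpace α] [OrderClosedTopology α] {s : Set α} (hs : s.OrdConnected)
    {y₁ y₂ : α} (h₁ : y₁ ∈ closure s) (h₂ : y₂ ∈ closure s) : Ioo y₁ y₂ ⊆ s := by
  intro t ht
  obtain ⟨u, hu, hut⟩ : ∃ u ∈ s, u < t := by
    by_contra! h
    exact ht.1.not_ge (closure_minimal h isClosed_Ici h₁)
  obtain ⟨v, hv, htv⟩ : ∃ v ∈ s, t < v := by
    by_contra! h
    exact ht.2.not_ge (closure_minimal h isClosed_Iic h₂)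
  exact hs.out hu hv ⟨hut.le, htv.le⟩

/-- Charge the pair `(B, i)` to `i` if `B` extends to the right of `I i` (then `sSup (I i) ∈ B`,
so `i` determines `B`), and to `B` otherwise (then `I i` is the rightmost interval meeting
`B`). -/
theorem ncard_incidences_le {α ι : Type*} [ConditionallyCompleteLinearOrder α] [Finite ι]
    {I : ι → Set α} (hI : ∀ i, (I i).OrdConnected)
    (hIdisj : ∀ i j, i ≠ j → Disjoint (I i) (I j))
    {𝒜 : Set (Set α)} (h𝒜 : 𝒜.Finite) (h𝒜conn : ∀ B ∈ 𝒜, B.OrdConnected)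
    (h𝒜disj : 𝒜.PairwiseDisjoint id) :
    {p : Set α × ι | p.1 ∈ 𝒜 ∧ (p.1 ∩ I p.2).Nonempty}.ncard ≤ 𝒜.ncard + Nat.card ι := by
  classical
  have := h𝒜.to_subtype
  set S := {p : Set α × ι | p.1 ∈ 𝒜 ∧ (p.1 ∩ I p.2).Nonempty}
  let ExtendsRight : Set α → ι → Prop := fun B i => ∃ x ∈ B ∩ I i, ∃ y ∈ B \ I i, x < y
  let charge : S → 𝒜 ⊕ ι := fun p =>
    if ExtendsRight p.1.1 p.1.2 then .inr p.1.2 else .inl ⟨p.1.1, p.2.1⟩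
  have hcharge : Function.Injective charge := by
    rintro ⟨⟨B, i⟩, hB, x, hxB, hxi⟩ ⟨⟨B', i'⟩, hB', x', hxB', hxi'⟩ heq
    by_cases h : ExtendsRight B i <;> by_cases h' : ExtendsRight B' i' <;>
      simp only [charge, h, h', if_true, if_false, reduceCtorEq, Sum.inl.injEq, Sum.inr.injEq,
        Subtype.mk.injEq] at heq
    · subst heq
      have hsup : ∀ {B}, ExtendsRight B i → B ∈ 𝒜 → sSup (I i) ∈ B := by
        rintro B ⟨x, ⟨hxB, hxi⟩, y, ⟨hyB, hyi⟩, hxy⟩ hB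
        exact (h𝒜conn B hB).out hxB hyB ((hI i).csSup_mem_Icc hxi hyi hxy.le)
      have : B = B' := h𝒜disj.elim hB hB' (not_disjoint_iff.2 ⟨_, hsup h hB, hsup h' hB'⟩)
      simp [this]
    · subst heq
      obtain rfl : i = i' := by
        by_contra hii
        have hx' : x' ∉ I i := fun hx' => (hIdisj _ _ hii).notMem_of_mem_right hxi' hx'
        have hx : x ∉ I i' := fun hx => (hIdisj _ _ hii).notMem_of_mem_left hxi hx
        have h₁ : x' ≤ x := not_lt.1 fun hlt => h ⟨x, ⟨hxB, hxi⟩, x', ⟨hxB', hx'⟩, hlt⟩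
        have h₂ : x ≤ x' := not_lt.1 fun hlt => h' ⟨x', ⟨hxB', hxi'⟩, x, ⟨hxB, hx⟩, hlt⟩
        exact hx' (le_antisymm h₁ h₂ ▸ hxi)
      rfl
  calc S.ncard = Nat.card S := (Nat.card_coe_set_eq S).symm
    _ ≤ Nat.card (𝒜 ⊕ ι) := Nat.card_le_card_of_injective charge hcharge
    _ = 𝒜.ncard + Nat.card ι := by rw [Nat.card_sum, Nat.card_coe_set_eq]

theorem strictMonoOn_closure_of_eqOn {s : Set ℝ} {f g : ℝ → ℝ} (hf : StrictMonoOn f s)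
    (hs : s.OrdConnected) (hg : Continuous g) (heq : EqOn f g s) :
    StrictMonoOn g (closure s) := by
  intro y₁ h₁ y₂ h₂ hy
  have hIoo := hs.Ioo_subset_of_mem_closure h₁ h₂
  obtain ⟨m₁, hym₁, hm₁⟩ := exists_between hy
  obtain ⟨m₂, hm₁₂, hm₂⟩ := exists_between hm₁
  have hm₁s : m₁ ∈ s := hIoo ⟨hym₁, hm₁⟩
  have hm₂s : m₂ ∈ s := hIoo ⟨hym₁.trans hm₁₂, hm₂⟩
  have hleft : g y₁ ≤ f m₁ := by
    refine le_of_tendsto (hg.continuousWithinAt (s := Ioi y₁)) ?_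
    filter_upwards [Ioo_mem_nhdsGT hym₁] with t ht
    have hts : t ∈ s := hIoo ⟨ht.1, ht.2.trans hm₁⟩
    exact heq hts ▸ (hf hts hm₁s ht.2).le
  have hright : f m₂ ≤ g y₂ := by
    refine ge_of_tendsto (hg.continuousWithinAt (s := Iio y₂)) ?_
    filter_upwards [Ioo_mem_nhdsLT hm₂] with t ht
    have hts : t ∈ s := hIoo ⟨hym₁.trans (hm₁₂.trans ht.1), ht.2⟩
    exact heq hts ▸ (hf hm₂s hts ht.1).le
  exact hleft.trans_lt ((hf hm₁s hm₂s hm₁₂).trans_le hright)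

namespace PCIM

variable (P : PCIM)

def F (i : Fin P.N) (A : Set ℝ) : Set ℝ := closure (P.f '' (A ∩ P.piece i))

theorem atomOf_append_singleton (w : List (Fin P.N)) (i : Fin P.N) :
    P.atomOf (w ++ [i]) = P.F i (P.atomOf w) := by
  simp [atomOf, F, List.foldl_append]

theorem isClosed_X : IsClosed P.X := isClosed_Icc

theorem piece_subset_X (i : Fin P.N) : P.piece i ⊆ P.X := by
  obtain ⟨c, d, h⟩ := P.piece_interval i
  exact h ▸ inter_subset_right

theorem piece_ordConnected (i : Fin P.N) : (P.piece i).OrdConnected := by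
  obtain ⟨c, d, h⟩ := P.piece_interval i
  exact h ▸ ordConnected_Ioo.inter ordConnected_Icc

theorem lipschitzOnWith_piece (i : Fin P.N) :
    LipschitzOnWith P.lam.toNNReal P.f (P.piece i) := by
  refine LipschitzOnWith.of_dist_le_mul fun x hx y hy => ?_
  rw [Real.coe_toNNReal _ P.hlam₀.le, Real.dist_eq, Real.dist_eq]
  exact P.contract i x hx y hy

theorem exists_continuous_injOn_closure_piece (hmono : P.PiecewiseMonotonic) (i : Fin P.N) :
    ∃ g : ℝ → ℝ, Continuous g ∧ EqOn P.f g (P.piece i) ∧ InjOn g (closure (P.piece i)) := by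
  obtain ⟨g, hg, hfg⟩ := (P.lipschitzOnWith_piece i).extend_real
  refine ⟨g, hg.continuous, hfg, ?_⟩
  rcases hmono i with hf | hf
  · exact (strictMonoOn_closure_of_eqOn hf (P.piece_ordConnected i) hg.continuous hfg).injOn
  · have := strictMonoOn_closure_of_eqOn hf.neg (P.piece_ordConnected i) hg.continuous.neg
      fun x hx => congrArg Neg.neg (hfg hx)
    exact fun x hx y hy hxy => this.injOn hx hy (congrArg Neg.neg hxy)

theorem F_eq_image_closure {i : Fin P.N} {g : ℝ → ℝ} (hg : Continuous g)
    (hfg : EqOn P.f g (P.piece i)) (A : Set ℝ) :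
    P.F i A = g '' closure (A ∩ P.piece i) := by
  have hcpt : IsCompact (closure (A ∩ P.piece i)) :=
    (isCompact_Icc.isBounded.subset
      (inter_subset_right.trans (P.piece_subset_X i))).isCompact_closure
  rw [F, image_congr fun x hx => hfg hx.2]
  exact (closure_minimal (image_mono subset_closure) (hcpt.image hg).isClosed).antisymm
    (image_closure_subset_closure_image hg)

theorem F_subset_closure_image (i : Fin P.N) (A : Set ℝ) :
    P.F i A ⊆ closure (P.f '' P.piece i) :=
  closure_mono (image_mono inter_subset_right)

theorem eq_and_not_disjoint_of_not_disjoint_F (hsep : P.SeparationProperty) {A B : Set ℝ}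
    (hA : IsClosed A) (hB : IsClosed B) {i j : Fin P.N} (h : ¬Disjoint (P.F i A) (P.F j B)) :
    i = j ∧ ¬Disjoint A B := by
  obtain ⟨x, hxA, hxB⟩ := not_disjoint_iff.1 h
  obtain rfl : i = j := by
    by_contra hij
    exact (hsep.2 i j hij).subset
      ⟨P.F_subset_closure_image i A hxA, P.F_subset_closure_image j B hxB⟩
  obtain ⟨g, hg, hfg, hinj⟩ := P.exists_continuous_injOn_closure_piece hsep.1 i
  rw [P.F_eq_image_closure hg hfg] at hxA hxB
  obtain ⟨y, hy, rfl⟩ := hxA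
  obtain ⟨y', hy', hyy'⟩ := hxB
  obtain rfl : y' = y :=
    hinj (closure_mono inter_subset_right hy') (closure_mono inter_subset_right hy) hyy'
  exact ⟨rfl, not_disjoint_iff.2 ⟨y', closure_minimal inter_subset_left hA hy,
    closure_minimal inter_subset_left hB hy'⟩⟩

theorem isClosed_atomOf (w : List (Fin P.N)) : IsClosed (P.atomOf w) := by
  induction w using List.reverseRecOn with
  | nil => exact P.isClosed_X
  | append_singleton v i _ => rw [atomOf_append_singleton]; exact isClosed_closure

theorem atomOf_ordConnected (w : List (Fin P.N)) : (P.atomOf w).OrdConnected := by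
  induction w using List.reverseRecOn with
  | nil => exact ordConnected_Icc
  | append_singleton v i ih =>
    rw [atomOf_append_singleton, F]
    refine (((ih.inter (P.piece_ordConnected i)).isPreconnected.image _ ?_).closure).ordConnected
    exact (P.lipschitzOnWith_piece i).continuousOn.mono inter_subset_right

theorem ediam_atomOf_le (w : List (Fin P.N)) :
    ediam (P.atomOf w) ≤ ENNReal.ofReal (P.b - P.a) * ENNReal.ofReal P.lam ^ w.length := by
  induction w using List.reverseRecOn with
  | nil =>
    rw [List.length_nil, pow_zero, mul_one, ← Real.ediam_Icc]
    rfl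
  | append_singleton v i ih =>
    rw [atomOf_append_singleton, F, ediam_closure, List.length_append, List.length_singleton,
      pow_succ, ← mul_assoc, mul_comm _ (ENNReal.ofReal P.lam)]
    refine ediam_image_le_iff.2 fun x hx y hy => (P.lipschitzOnWith_piece i hx.2 hy.2).trans ?_
    exact mul_le_mul_right ((edist_le_ediam_of_mem hx.1 hy.1).trans ih) _

theorem atomOf_eq_of_not_disjoint (hsep : P.SeparationProperty) {w₁ w₂ : List (Fin P.N)}
    (hlen : w₁.length = w₂.length) (h : ¬Disjoint (P.atomOf w₁) (P.atomOf w₂)) :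
    P.atomOf w₁ = P.atomOf w₂ := by
  induction w₁ using List.reverseRecOn generalizing w₂ with
  | nil => rw [List.eq_nil_of_length_eq_zero hlen.symm]
  | append_singleton v₁ i₁ ih =>
    obtain rfl | ⟨v₂, i₂, rfl⟩ := w₂.eq_nil_or_concat'
    · simp at hlen
    rw [atomOf_append_singleton, atomOf_append_singleton] at h ⊢
    obtain ⟨rfl, hv⟩ :=
      P.eq_and_not_disjoint_of_not_disjoint_F hsep (P.isClosed_atomOf v₁) (P.isClosed_atomOf v₂) h
    rw [ih (by simpa using hlen) hv]

theorem pairwiseDisjoint_atoms (hsep : P.SeparationProperty) (n : ℕ) :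
    (P.atoms n).PairwiseDisjoint id := by
  rintro _ ⟨w₁, hw₁, rfl, -⟩ _ ⟨w₂, hw₂, rfl, -⟩ hne
  exact not_not.1 (mt (P.atomOf_eq_of_not_disjoint hsep (hw₁.trans hw₂.symm)) hne)

theorem atoms_finite (n : ℕ) : (P.atoms n).Finite :=
  ((List.finite_length_eq (Fin P.N) n).image P.atomOf).subset
    fun _ ⟨w, hw, hA, _⟩ => ⟨w, hw, hA⟩

theorem atoms_zero : P.atoms 0 = {P.X} := by
  ext A
  constructor
  · rintro ⟨w, hw, rfl, -⟩
    rw [List.length_eq_zero_iff.1 hw]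
    rfl
  · rintro rfl
    exact ⟨[], rfl, rfl, nonempty_Icc.2 P.hab.le⟩

theorem atoms_succ_subset (n : ℕ) :
    P.atoms (n + 1) ⊆ (fun p => P.F p.2 p.1) ''
      {p : Set ℝ × Fin P.N | p.1 ∈ P.atoms n ∧ (p.1 ∩ P.piece p.2).Nonempty} := by
  rintro _ ⟨w, hw, rfl, hne⟩
  obtain rfl | ⟨v, i, rfl⟩ := w.eq_nil_or_concat'
  · simp at hw
  rw [atomOf_append_singleton] at hne ⊢
  have hvi : (P.atomOf v ∩ P.piece i).Nonempty := (closure_nonempty_iff.1 hne).of_image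
  exact ⟨(P.atomOf v, i), ⟨⟨v, by simpa using hw, rfl, hvi.mono inter_subset_left⟩, hvi⟩, rfl⟩

theorem ncard_atoms_succ_le (hsep : P.SeparationProperty) (n : ℕ) :
    (P.atoms (n + 1)).ncard ≤ (P.atoms n).ncard + P.N := by
  have hfin : {p : Set ℝ × Fin P.N | p.1 ∈ P.atoms n ∧ (p.1 ∩ P.piece p.2).Nonempty}.Finite :=
    ((P.atoms_finite n).prod finite_univ).subset fun p hp => ⟨hp.1, trivial⟩
  calc (P.atoms (n + 1)).ncard
      ≤ {p : Set ℝ × Fin P.N | p.1 ∈ P.atoms n ∧ (p.1 ∩ P.piece p.2).Nonempty}.ncard :=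
        (ncard_le_ncard (P.atoms_succ_subset n) (hfin.image _)).trans (ncard_image_le hfin)
    _ ≤ (P.atoms n).ncard + Nat.card (Fin P.N) :=
        ncard_incidences_le P.piece_ordConnected P.piece_disjoint (P.atoms_finite n)
          (fun _ ⟨w, _, hw, _⟩ => hw ▸ P.atomOf_ordConnected w) (P.pairwiseDisjoint_atoms hsep n)
    _ = (P.atoms n).ncard + P.N := by rw [Nat.card_fin]

theorem ncard_atoms_le (hsep : P.SeparationProperty) (n : ℕ) :
    (P.atoms n).ncard ≤ 1 + P.N * n := by
  induction n with
  | zero => simp [atoms_zero]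
  | succ n ih => linarith [P.ncard_atoms_succ_le hsep n]

theorem LambdaIter_subset_X (n : ℕ) : P.LambdaIter n ⊆ P.X := by
  induction n with
  | zero => exact subset_rfl
  | succ n ih =>
    exact closure_minimal (image_subset_iff.2 fun _ hx => P.mapsTo (ih hx.1)) P.isClosed_X

theorem LambdaIter_subset_sUnion_atoms (n : ℕ) : P.LambdaIter n ⊆ ⋃₀ P.atoms n := by
  induction n with
  | zero => simp [LambdaIter, atoms_zero]
  | succ n ih =>
    have hclosed : IsClosed (⋃₀ P.atoms (n + 1)) := by
      rw [sUnion_eq_biUnion]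
      exact (P.atoms_finite _).isClosed_biUnion fun _ ⟨w, _, hw, _⟩ => hw ▸ P.isClosed_atomOf w
    refine closure_minimal ?_ hclosed
    rintro _ ⟨x, ⟨hx, hxΔ⟩, rfl⟩
    obtain ⟨_, ⟨w, hw, rfl, -⟩, hxw⟩ := ih hx
    obtain ⟨i, hxi⟩ := mem_iUnion.1 (not_not.1 fun h => hxΔ ⟨P.LambdaIter_subset_X n hx, h⟩)
    have hfx : P.f x ∈ P.atomOf (w ++ [i]) := by
      rw [atomOf_append_singleton]
      exact subset_closure ⟨x, ⟨hxw, hxi⟩, rfl⟩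
    exact ⟨_, ⟨w ++ [i], by simp [hw], rfl, ⟨_, hfx⟩⟩, hfx⟩

theorem Lambda_subset_LambdaIter : ∀ n, P.Lambda ⊆ P.LambdaIter n
  | 0 => (iInter_subset _ 0).trans (P.LambdaIter_subset_X 1)
  | n + 1 => iInter_subset _ n

end PCIM

theorem dimH_attractor_eq_zero_general (P : PCIM)
    (hsep : P.SeparationProperty) :
    dimH P.Lambda = 0 :=
  dimH_eq_zero_of_linear_covers P.atoms ENNReal.ofReal_ne_top
    (ENNReal.ofReal_lt_one.2 P.hlam₁) P.atoms_finite (P.ncard_atoms_le hsep)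
    (fun _ _ ⟨w, hw, hA, _⟩ => hA ▸ hw ▸ P.ediam_atomOf_le w)
    fun n => (P.Lambda_subset_LambdaIter n).trans (P.LambdaIter_subset_sUnion_atoms n)

/-- Under the separation property and `D ⊆ X̃`, the Hausdorff
dimension of the attractor `Λ` is zero. -/
theorem dimH_attractor_eq_zero (P : PCIM)
    (hsep : P.SeparationProperty) (hD : P.D ⊆ P.Xtilde) :
    dimH P.Lambda = 0 :=
  dimH_attractor_eq_zero_general P hsep
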